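/- arXiv:math/0211145 — 3 statements merged into one kernel-verified Lean document; each statement's English description precedes it below -/
import Mathlib

section
/- Let (M₁, Δ₁) and (M₂, Δ₂) be bialgebras (or coalgebras with algebra structure), and let m : M₁ ⊗ M₂ → M₁ ⊗ M₂ be an algebra isomorphism satisfying the matching conditions (Δ₁ ⊗ id)∘m = m₂₃ ∘ m₁₃ ∘ (Δ₁ ⊗ id) and (id ⊗ Δ₂)∘m = m₁₃ ∘ m₁₂ ∘ (id ⊗ Δ₂). Then α : M₂ → M₁ ⊗ M₂ defined by α(x) = m(1 ⊗ x) satisfies the left coaction identity (Δ₁ ⊗ id)∘α = (id ⊗ α)∘α. -/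
/-! STATEMENT 4: a matching `m` of bialgebras `(M₁,Δ₁)`, `(M₂,Δ₂)` yields a left coaction
`α(x) = m(1 ⊗ x)`: `(Δ₁ ⊗ id)∘α = (id ⊗ α)∘α` (up to the associator). -/
open TensorProduct Coalgebra

noncomputable section

variable (K M₁ M₂ : Type*) [Field K] [Ring M₁] [Ring M₂] [Bialgebra K M₁] [Bialgebra K M₂]

/-- `m₂₃` : the map `m` applied to the last two legs of `M₁ ⊗ M₁ ⊗ M₂`. -/
def m23 (mL : (M₁ ⊗[K] M₂) →ₗ[K] (M₁ ⊗[K] M₂)) :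
    ((M₁ ⊗[K] M₁) ⊗[K] M₂) →ₗ[K] ((M₁ ⊗[K] M₁) ⊗[K] M₂) :=
  (TensorProduct.assoc K M₁ M₁ M₂).symm.toLinearMap ∘ₗ mL.lTensor M₁ ∘ₗ
    (TensorProduct.assoc K M₁ M₁ M₂).toLinearMap

/-- The flip of the first two legs of `M₁ ⊗ M₁ ⊗ M₂`. -/
def swapL : ((M₁ ⊗[K] M₁) ⊗[K] M₂) →ₗ[K] ((M₁ ⊗[K] M₁) ⊗[K] M₂) :=
  (TensorProduct.congr (TensorProduct.comm K M₁ M₁) (LinearEquiv.refl K M₂)).toLinearMap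

/-- `m₁₃` : the map `m` applied to the outer legs of `M₁ ⊗ M₁ ⊗ M₂`. -/
def m13L (mL : (M₁ ⊗[K] M₂) →ₗ[K] (M₁ ⊗[K] M₂)) :
    ((M₁ ⊗[K] M₁) ⊗[K] M₂) →ₗ[K] ((M₁ ⊗[K] M₁) ⊗[K] M₂) :=
  swapL K M₁ M₂ ∘ₗ m23 K M₁ M₂ mL ∘ₗ swapL K M₁ M₂

/-- `m₁₂` : the map `m` applied to the first two legs of `M₁ ⊗ M₂ ⊗ M₂`. -/
def m12 (mL : (M₁ ⊗[K] M₂) →ₗ[K] (M₁ ⊗[K] M₂)) :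
    (M₁ ⊗[K] (M₂ ⊗[K] M₂)) →ₗ[K] (M₁ ⊗[K] (M₂ ⊗[K] M₂)) :=
  (TensorProduct.assoc K M₁ M₂ M₂).toLinearMap ∘ₗ mL.rTensor M₂ ∘ₗ
    (TensorProduct.assoc K M₁ M₂ M₂).symm.toLinearMap

/-- The flip of the last two legs of `M₁ ⊗ M₂ ⊗ M₂`. -/
def swapR : (M₁ ⊗[K] (M₂ ⊗[K] M₂)) →ₗ[K] (M₁ ⊗[K] (M₂ ⊗[K] M₂)) :=
  (TensorProduct.congr (LinearEquiv.refl K M₁) (TensorProduct.comm K M₂ M₂)).toLinearMap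

/-- `m₁₃` : the map `m` applied to the outer legs of `M₁ ⊗ M₂ ⊗ M₂`. -/
def m13R (mL : (M₁ ⊗[K] M₂) →ₗ[K] (M₁ ⊗[K] M₂)) :
    (M₁ ⊗[K] (M₂ ⊗[K] M₂)) →ₗ[K] (M₁ ⊗[K] (M₂ ⊗[K] M₂)) :=
  swapR K M₁ M₂ ∘ₗ m12 K M₁ M₂ mL ∘ₗ swapR K M₁ M₂

/-- The first matching condition `(Δ₁ ⊗ id)∘m = m₂₃ ∘ m₁₃ ∘ (Δ₁ ⊗ id)`. -/
def MatchingLeft (mL : (M₁ ⊗[K] M₂) →ₗ[K] (M₁ ⊗[K] M₂)) : Prop :=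
  (comul (R := K) (A := M₁)).rTensor M₂ ∘ₗ mL =
    m23 K M₁ M₂ mL ∘ₗ m13L K M₁ M₂ mL ∘ₗ (comul (R := K) (A := M₁)).rTensor M₂

/-- The second matching condition `(id ⊗ Δ₂)∘m = m₁₃ ∘ m₁₂ ∘ (id ⊗ Δ₂)`. -/
def MatchingRight (mL : (M₁ ⊗[K] M₂) →ₗ[K] (M₁ ⊗[K] M₂)) : Prop :=
  (comul (R := K) (A := M₂)).lTensor M₁ ∘ₗ mL =
    m13R K M₁ M₂ mL ∘ₗ m12 K M₁ M₂ mL ∘ₗ (comul (R := K) (A := M₂)).lTensor M₁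

/-- `α(x) = m(1 ⊗ x)`. -/
def alphaMap (m : (M₁ ⊗[K] M₂) ≃ₐ[K] (M₁ ⊗[K] M₂)) : M₂ →ₗ[K] M₁ ⊗[K] M₂ :=
  m.toLinearMap ∘ₗ (Algebra.TensorProduct.includeRight : M₂ →ₐ[K] M₁ ⊗[K] M₂).toLinearMap

/- Apply the first matching condition to `1 ⊗ x`. Since `Δ₁ 1 = 1 ⊗ 1`, the map `m₁₃` sends
`1 ⊗ 1 ⊗ x` to `α x` placed on the outer legs, with `1` in the middle; `m₂₃` then turns each
`a ⊗ 1 ⊗ y` into `a ⊗ α y`. -/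

theorem TensorProduct.leftComm_one_tmul {R A B C : Type*} [CommSemiring R] [Semiring A]
    [Algebra R A] [AddCommMonoid B] [Module R B] [AddCommMonoid C] [Module R C] (t : B ⊗[R] C) :
    leftComm R A B C ((1 : A) ⊗ₜ t) = (TensorProduct.mk R A C 1).lTensor B t := by
  induction t using TensorProduct.induction_on with
  | zero => simp
  | tmul b c => rfl
  | add t u ht hu => simp only [tmul_add, map_add, ht, hu]

section

variable {K M₁ M₂}

theorem assoc_m23 (mL : (M₁ ⊗[K] M₂) →ₗ[K] (M₁ ⊗[K] M₂)) (u : (M₁ ⊗[K] M₁) ⊗[K] M₂) :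
    TensorProduct.assoc K M₁ M₁ M₂ (m23 K M₁ M₂ mL u) =
      mL.lTensor M₁ (TensorProduct.assoc K M₁ M₁ M₂ u) := by
  simp [m23]

theorem assoc_swapL_assoc_symm (u : M₁ ⊗[K] (M₁ ⊗[K] M₂)) :
    TensorProduct.assoc K M₁ M₁ M₂ (swapL K M₁ M₂ ((TensorProduct.assoc K M₁ M₁ M₂).symm u)) =
      leftComm K M₁ M₁ M₂ u :=
  rfl

theorem m13L_tmul (mL : (M₁ ⊗[K] M₂) →ₗ[K] (M₁ ⊗[K] M₂)) (a b : M₁) (y : M₂) :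
    m13L K M₁ M₂ mL ((a ⊗ₜ b) ⊗ₜ y) =
      swapL K M₁ M₂ ((TensorProduct.assoc K M₁ M₁ M₂).symm (b ⊗ₜ mL (a ⊗ₜ y))) := by
  simp [m13L, m23, swapL]

end

theorem alpha_coaction (m : (M₁ ⊗[K] M₂) ≃ₐ[K] (M₁ ⊗[K] M₂))
    (h₁ : MatchingLeft K M₁ M₂ m.toLinearMap) :
    (TensorProduct.assoc K M₁ M₁ M₂).toLinearMap ∘ₗ
        (comul (R := K) (A := M₁)).rTensor M₂ ∘ₗ alphaMap K M₁ M₂ m =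
      (alphaMap K M₁ M₂ m).lTensor M₁ ∘ₗ alphaMap K M₁ M₂ m := by
  ext x
  set α := alphaMap K M₁ M₂ m
  have hα : α x = m.toLinearMap ((1 : M₁) ⊗ₜ x) := rfl
  have hΔ : (comul (R := K) (A := M₁)).rTensor M₂ ((1 : M₁) ⊗ₜ x) =
      ((1 : M₁) ⊗ₜ (1 : M₁)) ⊗ₜ x := by
    simp [Algebra.TensorProduct.one_def]
  calc TensorProduct.assoc K M₁ M₁ M₂ ((comul (R := K) (A := M₁)).rTensor M₂ (α x))
      = TensorProduct.assoc K M₁ M₁ M₂ (m23 K M₁ M₂ m.toLinearMap (m13L K M₁ M₂ m.toLinearMap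
          ((comul (R := K) (A := M₁)).rTensor M₂ ((1 : M₁) ⊗ₜ x)))) :=
        congrArg (TensorProduct.assoc K M₁ M₁ M₂) (LinearMap.congr_fun h₁ ((1 : M₁) ⊗ₜ x))
    _ = m.toLinearMap.lTensor M₁ (leftComm K M₁ M₁ M₂ ((1 : M₁) ⊗ₜ α x)) := by
        rw [hΔ, m13L_tmul, assoc_m23, assoc_swapL_assoc_symm, hα]
    _ = α.lTensor M₁ (α x) := by
        rw [TensorProduct.leftComm_one_tmul, ← LinearMap.comp_apply, ← LinearMap.lTensor_comp]
        rfl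

end
end

section
/- Let (M₁, Δ₁), (M₂, Δ₂) be bialgebras and Z ∈ M₁ ⊗ M₂ an invertible element satisfying (Δ₁ ⊗ id)(Z) = Z₂₃Z₁₃ and (id ⊗ Δ₂)(Z) = Z₁₃Z₁₂. Then m(x) := Z x Z⁻¹ defines a matching of (M₁, Δ₁) and (M₂, Δ₂), i.e. m is an algebra automorphism of M₁ ⊗ M₂ satisfying (Δ₁ ⊗ id)∘m = m₂₃ ∘ m₁₃ ∘ (Δ₁ ⊗ id) and (id ⊗ Δ₂)∘m = m₁₃ ∘ m₁₂ ∘ (id ⊗ Δ₂). -/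
/-! Conjugation `Ad u = innerAut K u` by a unit commutes with algebra maps:
`f ∘ Ad u = Ad (f u) ∘ f`. Moreover the leg maps `m₂₃, m₁₃, m₁₂` of `m = Ad Z` are again inner,
namely `Ad Z₂₃, Ad Z₁₃, Ad Z₁₂`, since each is `Ad Z` transported along an algebra isomorphism
of tensor products. Hence
`(Δ₁ ⊗ id) ∘ Ad Z = Ad (Z₂₃ Z₁₃) ∘ (Δ₁ ⊗ id) = m₂₃ ∘ m₁₃ ∘ (Δ₁ ⊗ id)`, and likewise for `Δ₂`. -/

open TensorProduct Coalgebra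

noncomputable section

variable (K M₁ M₂ : Type*) [Field K] [Ring M₁] [Ring M₂] [Bialgebra K M₁] [Bialgebra K M₂]

/-- The embedding onto legs 1,3 of `M₁ ⊗ M₁ ⊗ M₂`. -/
def iota13L : (M₁ ⊗[K] M₂) →ₐ[K] (M₁ ⊗[K] M₁) ⊗[K] M₂ :=
  Algebra.TensorProduct.map
    (Algebra.TensorProduct.includeLeft : M₁ →ₐ[K] M₁ ⊗[K] M₁) (AlgHom.id K M₂)

/-- The embedding onto legs 2,3 of `M₁ ⊗ M₁ ⊗ M₂`. -/
def iota23L : (M₁ ⊗[K] M₂) →ₐ[K] (M₁ ⊗[K] M₁) ⊗[K] M₂ :=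
  Algebra.TensorProduct.map
    (Algebra.TensorProduct.includeRight : M₁ →ₐ[K] M₁ ⊗[K] M₁) (AlgHom.id K M₂)

/-- The embedding onto legs 1,2 of `M₁ ⊗ M₂ ⊗ M₂`. -/
def iota12R : (M₁ ⊗[K] M₂) →ₐ[K] M₁ ⊗[K] (M₂ ⊗[K] M₂) :=
  Algebra.TensorProduct.map (AlgHom.id K M₁)
    (Algebra.TensorProduct.includeLeft : M₂ →ₐ[K] M₂ ⊗[K] M₂)

/-- The embedding onto legs 1,3 of `M₁ ⊗ M₂ ⊗ M₂`. -/
def iota13R : (M₁ ⊗[K] M₂) →ₐ[K] M₁ ⊗[K] (M₂ ⊗[K] M₂) :=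
  Algebra.TensorProduct.map (AlgHom.id K M₁)
    (Algebra.TensorProduct.includeRight : M₂ →ₐ[K] M₂ ⊗[K] M₂)

section InnerAut

variable (R : Type*) {A B : Type*} [CommSemiring R] [Semiring A] [Semiring B] [Algebra R A]
  [Algebra R B]

def innerAut : Aˣ →* (A ≃ₐ[R] A) :=
  (MulSemiringAction.toAlgAut (ConjAct Aˣ) R A).comp ConjAct.toConjAct.toMonoidHom

variable {R}

theorem innerAut_apply (u : Aˣ) (x : A) : innerAut R u x = u * x * ↑u⁻¹ := rfl

theorem map_innerAut {F : Type*} [FunLike F A B] [AlgHomClass F R A B] (f : F) (u : Aˣ)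
    (x : A) : f (innerAut R u x) = innerAut R (Units.map (f : A →* B) u) (f x) := by
  simp only [innerAut_apply, map_mul, Units.coe_map, Units.coe_map_inv, MonoidHom.coe_coe]

theorem AlgHom.comp_innerAut_of_map_eq_mul (f : A →ₐ[R] B) {u : Aˣ} {v w : Bˣ}
    (h : f u = v * w) :
    f.toLinearMap ∘ₗ (innerAut R u).toLinearMap =
      (innerAut R v).toLinearMap ∘ₗ (innerAut R w).toLinearMap ∘ₗ f.toLinearMap := by
  have hu : Units.map (f : A →* B) u = v * w := Units.ext h
  ext x
  simp only [LinearMap.comp_apply, AlgEquiv.toLinearMap_apply, AlgHom.toLinearMap_apply]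
  rw [map_innerAut, hu, map_mul, AlgEquiv.mul_apply]

theorem lTensor_innerAut (u : Bˣ) :
    (innerAut R u).toLinearMap.lTensor A =
      (innerAut R (Units.map
        (Algebra.TensorProduct.includeRight : B →ₐ[R] A ⊗[R] B).toMonoidHom u)).toLinearMap := by
  ext a b
  simp [innerAut_apply]

theorem rTensor_innerAut (u : Aˣ) :
    (innerAut R u).toLinearMap.rTensor B =
      (innerAut R (Units.map
        (Algebra.TensorProduct.includeLeft : A →ₐ[R] A ⊗[R] B).toMonoidHom u)).toLinearMap := by
  ext a b
  simp [innerAut_apply]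

theorem AlgEquiv.conj_innerAut (e : A ≃ₐ[R] B) (u : Aˣ) :
    e.toLinearMap ∘ₗ (innerAut R u).toLinearMap ∘ₗ e.symm.toLinearMap =
      (innerAut R (Units.map e.toMonoidHom u)).toLinearMap := by
  ext x
  simp only [LinearMap.comp_apply, AlgEquiv.toLinearMap_apply]
  rw [map_innerAut, e.apply_symm_apply]
  rfl

end InnerAut

theorem assoc_symm_one_tmul_eq_iota23L (z : M₁ ⊗[K] M₂) :
    (Algebra.TensorProduct.assoc K K K M₁ M₁ M₂).symm (1 ⊗ₜ z) = iota23L K M₁ M₂ z := by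
  induction z using TensorProduct.induction_on with
  | zero => simp
  | tmul x y => rfl
  | add x y hx hy => rw [tmul_add, map_add, hx, hy, map_add]

theorem assoc_tmul_one_eq_iota12R (z : M₁ ⊗[K] M₂) :
    Algebra.TensorProduct.assoc K K K M₁ M₂ M₂ (z ⊗ₜ 1) = iota12R K M₁ M₂ z := by
  induction z using TensorProduct.induction_on with
  | zero => simp
  | tmul x y => rfl
  | add x y hx hy => rw [add_tmul, map_add, hx, hy, map_add]

theorem swapL_iota23L (z : M₁ ⊗[K] M₂) :
    swapL K M₁ M₂ (iota23L K M₁ M₂ z) = iota13L K M₁ M₂ z := by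
  induction z using TensorProduct.induction_on with
  | zero => simp
  | tmul x y => rfl
  | add x y hx hy => rw [map_add, map_add, hx, hy, map_add]

theorem swapR_iota12R (z : M₁ ⊗[K] M₂) :
    swapR K M₁ M₂ (iota12R K M₁ M₂ z) = iota13R K M₁ M₂ z := by
  induction z using TensorProduct.induction_on with
  | zero => simp
  | tmul x y => rfl
  | add x y hx hy => rw [map_add, map_add, hx, hy, map_add]

-- The closing `rfl`s identify `TensorProduct.assoc`, `swapL` and `swapR` with the linear maps
-- underlying `Algebra.TensorProduct.assoc` and `Algebra.TensorProduct.congr`.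
theorem m23_innerAut (u : (M₁ ⊗[K] M₂)ˣ) :
    m23 K M₁ M₂ (innerAut K u).toLinearMap =
      (innerAut K (Units.map (iota23L K M₁ M₂).toMonoidHom u)).toLinearMap := by
  have hu : Units.map (Algebra.TensorProduct.assoc K K K M₁ M₁ M₂).symm.toMonoidHom
      (Units.map Algebra.TensorProduct.includeRight.toMonoidHom u) =
        Units.map (iota23L K M₁ M₂).toMonoidHom u :=
    Units.ext (assoc_symm_one_tmul_eq_iota23L K M₁ M₂ u)
  rw [m23, lTensor_innerAut, ← hu, ← AlgEquiv.conj_innerAut]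
  rfl

theorem m13L_innerAut (u : (M₁ ⊗[K] M₂)ˣ) :
    m13L K M₁ M₂ (innerAut K u).toLinearMap =
      (innerAut K (Units.map (iota13L K M₁ M₂).toMonoidHom u)).toLinearMap := by
  have hu : Units.map (Algebra.TensorProduct.congr (Algebra.TensorProduct.comm K M₁ M₁)
      (AlgEquiv.refl : M₂ ≃ₐ[K] M₂)).toMonoidHom
        (Units.map (iota23L K M₁ M₂).toMonoidHom u) =
        Units.map (iota13L K M₁ M₂).toMonoidHom u := Units.ext (swapL_iota23L K M₁ M₂ u)
  rw [m13L, m23_innerAut, ← hu, ← AlgEquiv.conj_innerAut]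
  rfl

theorem m12_innerAut (u : (M₁ ⊗[K] M₂)ˣ) :
    m12 K M₁ M₂ (innerAut K u).toLinearMap =
      (innerAut K (Units.map (iota12R K M₁ M₂).toMonoidHom u)).toLinearMap := by
  have hu : Units.map (Algebra.TensorProduct.assoc K K K M₁ M₂ M₂).toMonoidHom
      (Units.map (Algebra.TensorProduct.includeLeft :
        M₁ ⊗[K] M₂ →ₐ[K] (M₁ ⊗[K] M₂) ⊗[K] M₂).toMonoidHom u) =
        Units.map (iota12R K M₁ M₂).toMonoidHom u :=
    Units.ext (assoc_tmul_one_eq_iota12R K M₁ M₂ u)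
  rw [m12, rTensor_innerAut, ← hu, ← AlgEquiv.conj_innerAut]
  rfl

theorem m13R_innerAut (u : (M₁ ⊗[K] M₂)ˣ) :
    m13R K M₁ M₂ (innerAut K u).toLinearMap =
      (innerAut K (Units.map (iota13R K M₁ M₂).toMonoidHom u)).toLinearMap := by
  have hu : Units.map (Algebra.TensorProduct.congr (AlgEquiv.refl : M₁ ≃ₐ[K] M₁)
      (Algebra.TensorProduct.comm K M₂ M₂)).toMonoidHom
        (Units.map (iota12R K M₁ M₂).toMonoidHom u) =
        Units.map (iota13R K M₁ M₂).toMonoidHom u := Units.ext (swapR_iota12R K M₁ M₂ u)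
  rw [m13R, m12_innerAut, ← hu, ← AlgEquiv.conj_innerAut]
  rfl

theorem bicharacter_gives_matching (Z : (M₁ ⊗[K] M₂)ˣ)
    (hZ₁ : (comul (R := K) (A := M₁)).rTensor M₂ (Z : M₁ ⊗[K] M₂) =
      iota23L K M₁ M₂ (Z : M₁ ⊗[K] M₂) * iota13L K M₁ M₂ (Z : M₁ ⊗[K] M₂))
    (hZ₂ : (comul (R := K) (A := M₂)).lTensor M₁ (Z : M₁ ⊗[K] M₂) =
      iota13R K M₁ M₂ (Z : M₁ ⊗[K] M₂) * iota12R K M₁ M₂ (Z : M₁ ⊗[K] M₂)) :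
    ∃ m : (M₁ ⊗[K] M₂) ≃ₐ[K] (M₁ ⊗[K] M₂),
      (∀ x : M₁ ⊗[K] M₂, m x = (Z : M₁ ⊗[K] M₂) * x * ((Z⁻¹ : (M₁ ⊗[K] M₂)ˣ) : M₁ ⊗[K] M₂)) ∧
      MatchingLeft K M₁ M₂ m.toLinearMap ∧ MatchingRight K M₁ M₂ m.toLinearMap := by
  refine ⟨innerAut K Z, innerAut_apply Z, ?_, ?_⟩
  · rw [MatchingLeft, m23_innerAut, m13L_innerAut]
    exact (Algebra.TensorProduct.map (Bialgebra.comulAlgHom K M₁) (AlgHom.id K M₂))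
      |>.comp_innerAut_of_map_eq_mul hZ₁
  · rw [MatchingRight, m13R_innerAut, m12_innerAut]
    exact (Algebra.TensorProduct.map (AlgHom.id K M₁) (Bialgebra.comulAlgHom K M₂))
      |>.comp_innerAut_of_map_eq_mul hZ₂

end
end

section
/- Every continuous 2-cocycle on ℝ with values in the circle group 𝕋 is a coboundary: if λ : ℝ × ℝ → 𝕋 is continuous and satisfies λ(t, s)·λ(t + s, r) = λ(s, r)·λ(t, s + r) for all t, s, r ∈ ℝ and λ(0, 0) = 1, then there exists a continuous function μ : ℝ → 𝕋 such that λ(t, s) = μ(t)·μ(s)·conj(μ(t + s)) for all t, s ∈ ℝ. -/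
/-! Since `ℝ × ℝ` is simply connected, `λ = exp ∘ F` for a continuous real `F`. The cocycle defect
of `F` is continuous with values in `2πℤ` on the connected space `ℝ³`, so it is constantly equal to
its value at the origin, which is `0`: `F` is a real 2-cocycle. A continuous real 2-cocycle `f` is a
coboundary: integrating the cocycle identity over `r ∈ [0, 1]` exhibits `f` as the coboundary of
`x ↦ ∫₀¹ f(x, r) dr` up to `∫₀ˢ (f(t, u + 1) - f(t, u)) du`, and the cocycle identity turns this
term into the coboundary of a primitive of `x ↦ f(x, 1)`. -/

open intervalIntegral

theorem Circle.exists_continuous_lift {A : Type*} [TopologicalSpace A] [SimplyConnectedSpace A]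
    [LocallyPathConnectedSpace A] {f : A → Circle} (hf : Continuous f) :
    ∃ F : A → ℝ, Continuous F ∧ ∀ a, Circle.exp (F a) = f a := by
  obtain ⟨a₀⟩ : Nonempty A := inferInstance
  obtain ⟨F, -, hF⟩ := (Circle.isCoveringMap_exp.existsUnique_continuousMap_lifts ⟨f, hf⟩ a₀
    (Complex.arg (f a₀)) (Circle.exp_arg _)).exists
  exact ⟨F, F.continuous, congrFun hF⟩

theorem add_cocycle_of_exp_cocycle {G : Type*} [TopologicalSpace G] [AddZeroClass G]
    [ContinuousAdd G] [PreconnectedSpace G] {f : G → G → ℝ}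
    (hf : Continuous fun p : G × G => f p.1 p.2)
    (h : ∀ t s r, Circle.exp (f t s) * Circle.exp (f (t + s) r) =
      Circle.exp (f s r) * Circle.exp (f t (s + r)))
    (t s r : G) : f t s + f (t + s) r = f s r + f t (s + r) := by
  have hdefect : Continuous fun p : G × G × G =>
      f p.1 p.2.1 + f (p.1 + p.2.1) p.2.2 - (f p.2.1 p.2.2 + f p.1 (p.2.1 + p.2.2)) := by
    have hf' {g₁ g₂ : G × G × G → G} (h₁ : Continuous g₁) (h₂ : Continuous g₂) :
        Continuous fun p => f (g₁ p) (g₂ p) := hf.comp (h₁.prodMk h₂)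
    fun_prop
  have hdefect_zero := Circle.isCoveringMap_exp.const_of_comp hdefect
    (fun p q => by simp only [Circle.exp_sub, Circle.exp_add, h, div_self']) (t, s, r) (0, 0, 0)
  simp only [add_zero, sub_self] at hdefect_zero
  linarith

theorem add_cocycle_sub_right {G : Type*} [Add G] {f : G → G → ℝ}
    (hf : ∀ t s r, f t s + f (t + s) r = f s r + f t (s + r)) (t u r : G) :
    f t (u + r) - f t u = f (t + u) r - f u r := by
  linarith [hf t u r]

theorem integral_sub_comp_add_right {g : ℝ → ℝ} (hg : Continuous g) (a s : ℝ) :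
    ∫ u in (0 : ℝ)..s, (g (u + a) - g u) = (∫ u in s..s + a, g u) - ∫ u in (0 : ℝ)..a, g u := by
  rw [integral_sub ((by fun_prop : Continuous fun u => g (u + a)).intervalIntegrable _ _)
    (hg.intervalIntegrable _ _), integral_comp_add_right g a, zero_add,
    integral_interval_sub_interval_comm' (hg.intervalIntegrable _ _) (hg.intervalIntegrable _ _)
    (hg.intervalIntegrable _ _)]

theorem integral_comp_add_left_sub {k : ℝ → ℝ} (hk : Continuous k) (t s : ℝ) :
    ∫ u in (0 : ℝ)..s, (k (t + u) - k u) =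
      (∫ u in (0 : ℝ)..t + s, k u) - (∫ u in (0 : ℝ)..t, k u) - ∫ u in (0 : ℝ)..s, k u := by
  rw [integral_sub ((by fun_prop : Continuous fun u => k (t + u)).intervalIntegrable _ _)
    (hk.intervalIntegrable _ _), integral_comp_add_left k t, add_zero,
    integral_interval_sub_left (hk.intervalIntegrable _ _) (hk.intervalIntegrable _ _)]

theorem exists_continuous_coboundary_of_add_cocycle {f : ℝ → ℝ → ℝ}
    (hf : Continuous fun p : ℝ × ℝ => f p.1 p.2)
    (hcoc : ∀ t s r, f t s + f (t + s) r = f s r + f t (s + r)) :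
    ∃ g : ℝ → ℝ, Continuous g ∧ ∀ t s, f t s = g t + g s - g (t + s) := by
  have hf_right (t : ℝ) : Continuous (f t) := hf.comp (continuous_const.prodMk continuous_id)
  have hf_one : Continuous fun x => f x 1 := hf.comp (continuous_id.prodMk continuous_const)
  refine ⟨fun x => (∫ r in (0 : ℝ)..1, f x r) - ∫ u in (0 : ℝ)..x, f u 1,
    (continuous_parametric_intervalIntegral_of_continuous' hf 0 1).sub
      (continuous_primitive (fun a b => hf_one.intervalIntegrable a b) 0), fun t s => ?_⟩
  have averaged : f t s + ∫ r in (0 : ℝ)..1, f (t + s) r =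
      (∫ r in (0 : ℝ)..1, f s r) + ∫ u in s..s + 1, f t u := by
    have := integral_congr (μ := MeasureTheory.volume) (a := 0) (b := 1) fun r _ => hcoc t s r
    rwa [integral_add intervalIntegrable_const ((hf_right _).intervalIntegrable _ _),
      integral_add ((hf_right _).intervalIntegrable _ _)
        ((by fun_prop : Continuous fun r => f t (s + r)).intervalIntegrable _ _),
      integral_const, integral_comp_add_left (f t) s, add_zero, sub_zero, one_smul] at this
  have shifted : ∫ u in (0 : ℝ)..s, (f t (u + 1) - f t u) =
      ∫ u in (0 : ℝ)..s, (f (t + u) 1 - f u 1) :=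
    integral_congr fun u _ => add_cocycle_sub_right hcoc t u 1
  linarith [integral_sub_comp_add_right (hf_right t) 1 s, integral_comp_add_left_sub hf_one t s]

theorem continuous_circle_cocycle_is_coboundary_general (l : ℝ → ℝ → Circle)
    (h_cont : Continuous fun p : ℝ × ℝ => l p.1 p.2)
    (h_cocycle : ∀ t s r : ℝ, l t s * l (t + s) r = l s r * l t (s + r)) :
    ∃ μ : ℝ → Circle, Continuous μ ∧ ∀ t s : ℝ, l t s = μ t * μ s * (μ (t + s))⁻¹ := by
  obtain ⟨F, hF, hF_lift⟩ := Circle.exists_continuous_lift h_cont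
  have hF_cocycle := add_cocycle_of_exp_cocycle (f := fun t s => F (t, s)) hF
    fun t s r => by simp only [hF_lift, h_cocycle]
  obtain ⟨g, hg, hF_eq⟩ := exists_continuous_coboundary_of_add_cocycle hF hF_cocycle
  refine ⟨fun t => Circle.exp (g t), Circle.exp.continuous.comp hg, fun t s => ?_⟩
  rw [← hF_lift (t, s), hF_eq, Circle.exp_sub, Circle.exp_add, div_eq_mul_inv]

theorem continuous_circle_cocycle_is_coboundary (l : ℝ → ℝ → Circle)
    (h_cont : Continuous fun p : ℝ × ℝ => l p.1 p.2)
    (h_cocycle : ∀ t s r : ℝ, l t s * l (t + s) r = l s r * l t (s + r))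
    (h_norm : l 0 0 = 1) :
    ∃ μ : ℝ → Circle, Continuous μ ∧ ∀ t s : ℝ, l t s = μ t * μ s * (μ (t + s))⁻¹ :=
  continuous_circle_cocycle_is_coboundary_general l h_cont h_cocycle
end
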